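/- (Auxiliary-channel bounds on the information rate of a CC-QSC.) Let a CC-QSC {N^{y|x}} with finite alphabets X, Y, memory dimension d and initial density matrix ρ₀ be given, together with an auxiliary CC-QSC {N̂^{y|x}} on the same alphabets with memory dimension d̂ and initial density matrix ρ̂₀, a PMF Q on X, and n ≥ 1. Write Q⁽ⁿ⁾(x₁ⁿ) := ∏_{ℓ=1}^{n} Q(x_ℓ), P(y₁ⁿ|x₁ⁿ) := tr(N^{y_n|x_n}(⋯N^{y_1|x_1}(ρ₀)⋯)), P̂(y₁ⁿ|x₁ⁿ) := tr(N̂^{y_n|x_n}(⋯N̂^{y_1|x_1}(ρ̂₀)⋯)), (QP)(y₁ⁿ) := ∑_{x₁ⁿ} Q⁽ⁿ⁾(x₁ⁿ)·P(y₁ⁿ|x₁ⁿ), and (QP̂)(y₁ⁿ) := ∑_{x₁ⁿ} Q⁽ⁿ⁾(x₁ⁿ)·P̂(y₁ⁿ|x₁ⁿ). Assume P̂(y₁ⁿ|x₁ⁿ) > 0 whenever Q⁽ⁿ⁾(x₁ⁿ)·P(y₁ⁿ|x₁ⁿ) > 0. Define I⁽ⁿ⁾ := (1/n)·∑_{x₁ⁿ,y₁ⁿ}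 Q⁽ⁿ⁾·P·log(P/(QP)), the upper bound Ī⁽ⁿ⁾ := (1/n)·∑_{x₁ⁿ,y₁ⁿ} Q⁽ⁿ⁾·P·log(P/(QP̂)), and the lower bound Ĭ⁽ⁿ⁾ := (1/n)·∑_{x₁ⁿ,y₁ⁿ} Q⁽ⁿ⁾·P·log(P̂/(QP̂)), with the convention that terms with Q⁽ⁿ⁾(x₁ⁿ)·P(y₁ⁿ|x₁ⁿ) = 0 are 0. Then Ī⁽ⁿ⁾ − I⁽ⁿ⁾ = (1/n)·∑_{y₁ⁿ : (QP)(y₁ⁿ)>0} (QP)(y₁ⁿ)·log((QP)(y₁ⁿ)/(QP̂)(y₁ⁿ)) ≥ 0, and I⁽ⁿ⁾ − Ĭ⁽ⁿ⁾ = (1/n)·∑_{y₁ⁿ : (QP)(y₁ⁿ)>0} (QP)(y₁ⁿ)·∑_{x₁ⁿ : V(x₁ⁿ|y₁ⁿ)>0} V(x₁ⁿ|y₁ⁿ)·log(V(x₁ⁿ|y₁ⁿ)/V̂(x₁ⁿ|y₁ⁿ)) ≥ 0, where V(x₁ⁿ|y₁ⁿ) := Q⁽ⁿ⁾(x₁ⁿ)·P(y₁ⁿ|x₁ⁿ)/(QP)(y₁ⁿ)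 and V̂(x₁ⁿ|y₁ⁿ) := Q⁽ⁿ⁾(x₁ⁿ)·P̂(y₁ⁿ|x₁ⁿ)/(QP̂)(y₁ⁿ). In particular Ĭ⁽ⁿ⁾ ≤ I⁽ⁿ⁾ ≤ Ī⁽ⁿ⁾. -/

import Mathlib

/-!
Termwise, `log (P / QP̂) - log (P / QP) = log (QP / QP̂)` and
`log (P / QP) - log (P̂ / QP̂) = log (V / V̂)` wherever `Q⁽ⁿ⁾ P > 0`, so `Ī - I` is the relative
entropy of the output distributions and `I - Ĭ` the `QP`-average of the relative entropies of the
backward channels `V(·|y)`, `V̂(·|y)`. Both are nonnegative by Gibbs' inequality, summed from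
`p - q ≤ p log (p / q)`; the support hypothesis makes `q > 0` wherever `p > 0`. The quantum
structure enters only in that `P(·|x)` and `P̂(·|x)` are probability distributions: Kraus maps
preserve positivity, and summed over the outputs they preserve the trace.
-/

open Matrix Finset

/-- `evolve Nmap ρ₀ n x y = N^{y_n|x_n}(⋯ N^{y_1|x_1}(ρ₀) ⋯)`:
the iterated application of the channel maps along the input/output sequences,
with `N^{y_1|x_1}` applied first. -/
noncomputable def evolve {X Y : Type} {d : ℕ}
    (Nmap : X → Y → Matrix (Fin d) (Fin d) ℂ → Matrix (Fin d) (Fin d) ℂ)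
    (ρ0 : Matrix (Fin d) (Fin d) ℂ) :
    (n : ℕ) → (Fin n → X) → (Fin n → Y) → Matrix (Fin d) (Fin d) ℂ
  | 0, _, _ => ρ0
  | n + 1, x, y =>
      Nmap (x (Fin.last n)) (y (Fin.last n))
        (evolve Nmap ρ0 n (fun i => x i.castSucc) (fun i => y i.castSucc))

open Real
open scoped ComplexOrder

noncomputable def krausMap {m K : Type*} [Fintype m] [Fintype K] (F : K → Matrix m m ℂ)
    (ρ : Matrix m m ℂ) : Matrix m m ℂ :=
  ∑ k, F k * ρ * (F k)ᴴ

section Kraus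

variable {m : Type*} [Fintype m]

theorem Matrix.PosSemidef.krausMap {K : Type*} [Fintype K] {ρ : Matrix m m ℂ}
    (hρ : ρ.PosSemidef) (F : K → Matrix m m ℂ) : (krausMap F ρ).PosSemidef :=
  posSemidef_sum _ fun k _ => hρ.mul_mul_conjTranspose_same (F k)

theorem sum_trace_krausMap [DecidableEq m] {Y : Type*} [Fintype Y] {κ : Y → Type*}
    [∀ y, Fintype (κ y)] {F : ∀ y, κ y → Matrix m m ℂ} (hF : ∑ y, ∑ k, (F y k)ᴴ * F y k = 1)
    (ρ : Matrix m m ℂ) :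
    ∑ y, (krausMap (F y) ρ).trace = ρ.trace :=
  calc ∑ y, (krausMap (F y) ρ).trace = ((∑ y, ∑ k, (F y k)ᴴ * F y k) * ρ).trace := by
        simp only [krausMap, trace_sum, sum_mul, trace_mul_cycle (F _ _)]
    _ = ρ.trace := by rw [hF, one_mul]

end Kraus

section Evolve

variable {X Y : Type} {d : ℕ}
  {Nmap : X → Y → Matrix (Fin d) (Fin d) ℂ → Matrix (Fin d) (Fin d) ℂ}
  {ρ0 : Matrix (Fin d) (Fin d) ℂ}

theorem evolve_posSemidef (hN : ∀ x y ρ, ρ.PosSemidef → (Nmap x y ρ).PosSemidef)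
    (hρ0 : ρ0.PosSemidef) : ∀ n x y, (evolve Nmap ρ0 n x y).PosSemidef
  | 0, _, _ => hρ0
  | n + 1, _, _ => hN _ _ _ (evolve_posSemidef hN hρ0 n _ _)

theorem sum_trace_evolve [Fintype Y] (hN : ∀ x ρ, ∑ y, (Nmap x y ρ).trace = ρ.trace) :
    ∀ n x, ∑ y : Fin n → Y, (evolve Nmap ρ0 n x y).trace = ρ0.trace
  | 0, _ => by simp [evolve]
  | n + 1, x => by
    rw [← (Fin.snocEquiv fun _ => Y).sum_comp, Fintype.sum_prod_type, sum_comm]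
    simp only [Fin.snocEquiv, Equiv.coe_fn_mk, evolve, Fin.snoc_last, Fin.snoc_castSucc, hN]
    exact sum_trace_evolve hN n _

variable {κ : X → Y → Type*} [∀ x y, Fintype (κ x y)]
  (F : ∀ x y, κ x y → Matrix (Fin d) (Fin d) ℂ)

theorem re_trace_evolve_krausMap_nonneg (hρ0 : ρ0.PosSemidef) (n : ℕ) (x : Fin n → X)
    (y : Fin n → Y) : 0 ≤ (evolve (fun x y => krausMap (F x y)) ρ0 n x y).trace.re :=
  (Complex.nonneg_iff.mp
    (evolve_posSemidef (fun _ _ _ hρ => hρ.krausMap _) hρ0 n x y).trace_nonneg).1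

theorem sum_re_trace_evolve_krausMap [Fintype Y]
    (hF : ∀ x, ∑ y, ∑ k, (F x y k)ᴴ * F x y k = 1) (hρ0 : ρ0.trace = 1) (n : ℕ)
    (x : Fin n → X) : ∑ y, (evolve (fun x y => krausMap (F x y)) ρ0 n x y).trace.re = 1 := by
  rw [← Complex.re_sum, sum_trace_evolve (fun x => sum_trace_krausMap (hF x)), hρ0,
    Complex.one_re]

end Evolve

theorem Real.sub_le_mul_log_div {p q : ℝ} (hp : 0 < p) (hq : 0 < q) :
    p - q ≤ p * log (p / q) := by
  have h := mul_le_mul_of_nonneg_left (one_sub_inv_le_log_of_pos (div_pos hp hq)) hp.le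
  rwa [mul_sub, inv_div, mul_div_cancel₀ _ hp.ne', mul_one] at h

theorem sum_mul_log_div_nonneg {ι : Type*} [Fintype ι] {p q : ι → ℝ} (hp : ∀ i, 0 ≤ p i)
    (hq : ∀ i, 0 ≤ q i) (hpq : ∀ i, 0 < p i → 0 < q i) (hsum : ∑ i, q i ≤ ∑ i, p i) :
    0 ≤ ∑ i, p i * log (p i / q i) :=
  calc 0 ≤ ∑ i, (p i - q i) := by rw [sum_sub_distrib]; linarith
    _ ≤ ∑ i, p i * log (p i / q i) := sum_le_sum fun i _ => by
      rcases (hp i).eq_or_lt with h | h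
      · simp [← h, hq i]
      · exact sub_le_mul_log_div h (hpq i h)

theorem sum_filter_pos_mul {ι : Type*} [Fintype ι] {f g : ι → ℝ} (hf : ∀ i, 0 ≤ f i) :
    ∑ i ∈ univ.filter (fun i => 0 < f i), f i * g i = ∑ i, f i * g i :=
  sum_filter_of_ne fun i _ h => (hf i).lt_of_ne (left_ne_zero_of_mul h).symm

section Mixture

variable {A B : Type*} [Fintype A]

-- In the paper's notation, `mixture Q P = QP` and `posterior Q P = V`.
def mixture (W : A → ℝ) (P : A → B → ℝ) (b : B) : ℝ :=
  ∑ a, W a * P a b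

noncomputable def posterior (W : A → ℝ) (P : A → B → ℝ) (a : A) (b : B) : ℝ :=
  W a * P a b / mixture W P b

variable {W : A → ℝ} {P Ph : A → B → ℝ}

theorem mixture_nonneg (hW : ∀ a, 0 ≤ W a) (hP : ∀ a b, 0 ≤ P a b) (b : B) :
    0 ≤ mixture W P b :=
  sum_nonneg fun a _ => mul_nonneg (hW a) (hP a b)

theorem mul_le_mixture (hW : ∀ a, 0 ≤ W a) (hP : ∀ a b, 0 ≤ P a b) (a : A) (b : B) :
    W a * P a b ≤ mixture W P b :=
  single_le_sum (f := fun a => W a * P a b) (fun a _ => mul_nonneg (hW a) (hP a b)) (mem_univ a)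

theorem mixture_pos (hW : ∀ a, 0 ≤ W a) (hP : ∀ a b, 0 ≤ P a b) (hPh : ∀ a b, 0 ≤ Ph a b)
    (hs : ∀ a b, 0 < W a * P a b → 0 < Ph a b) {b : B} (h : 0 < mixture W P b) :
    0 < mixture W Ph b := by
  obtain ⟨a, -, ha⟩ := (sum_pos_iff_of_nonneg fun a _ => mul_nonneg (hW a) (hP a b)).mp h
  have hWa : 0 < W a := pos_of_mul_pos_left ha (hP a b)
  exact (mul_pos hWa (hs a b ha)).trans_le (mul_le_mixture hW hPh a b)

theorem sum_mixture [Fintype B] (hP : ∀ a, ∑ b, P a b = 1) : ∑ b, mixture W P b = ∑ a, W a := by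
  simp only [mixture]
  rw [sum_comm]
  simp only [← mul_sum, hP, mul_one]

theorem posterior_nonneg (hW : ∀ a, 0 ≤ W a) (hP : ∀ a b, 0 ≤ P a b) (a : A) (b : B) :
    0 ≤ posterior W P a b :=
  div_nonneg (mul_nonneg (hW a) (hP a b)) (mixture_nonneg hW hP b)

theorem sum_posterior {b : B} (h : mixture W P b ≠ 0) : ∑ a, posterior W P a b = 1 := by
  simp only [posterior]
  rw [← sum_div]
  exact div_self h

-- No positivity hypothesis on `mixture W P b`: when it vanishes, so does every `W a * P a b`.
theorem mixture_mul_posterior (hW : ∀ a, 0 ≤ W a) (hP : ∀ a b, 0 ≤ P a b) (a : A) (b : B) :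
    mixture W P b * posterior W P a b = W a * P a b := by
  rcases (mixture_nonneg hW hP b).eq_or_lt with h | h
  · rw [← h, zero_mul]
    exact (le_antisymm (h ▸ mul_le_mixture hW hP a b) (mul_nonneg (hW a) (hP a b))).symm
  · exact mul_div_cancel₀ _ h.ne'

variable [Fintype B] (hW : ∀ a, 0 ≤ W a) (hP : ∀ a b, 0 ≤ P a b) (hPh : ∀ a b, 0 ≤ Ph a b)
  (hs : ∀ a b, 0 < W a * P a b → 0 < Ph a b)
include hW hP hPh hs

theorem sum_mul_log_div_mixture_sub_eq :
    ∑ a, ∑ b, W a * P a b * log (P a b / mixture W Ph b) -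
        ∑ a, ∑ b, W a * P a b * log (P a b / mixture W P b) =
      ∑ b ∈ univ.filter (fun b => 0 < mixture W P b),
        mixture W P b * log (mixture W P b / mixture W Ph b) := by
  have term : ∀ a b, W a * P a b * log (P a b / mixture W Ph b) -
      W a * P a b * log (P a b / mixture W P b) =
        W a * P a b * log (mixture W P b / mixture W Ph b) := by
    intro a b
    rcases (mul_nonneg (hW a) (hP a b)).eq_or_lt with h | h
    · simp [← h]
    have hPab : 0 < P a b := pos_of_mul_pos_right h (hW a)
    have hmix : 0 < mixture W P b := h.trans_le (mul_le_mixture hW hP a b)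
    have hmixh : 0 < mixture W Ph b := mixture_pos hW hP hPh hs hmix
    rw [log_div hPab.ne' hmixh.ne', log_div hPab.ne' hmix.ne', log_div hmix.ne' hmixh.ne']
    ring
  rw [sum_filter_pos_mul (mixture_nonneg hW hP), ← sum_sub_distrib]
  simp only [← sum_sub_distrib, term]
  rw [sum_comm]
  simp only [← sum_mul]
  rfl

theorem sum_mul_log_div_sub_eq_posterior :
    ∑ a, ∑ b, W a * P a b * log (P a b / mixture W P b) -
        ∑ a, ∑ b, W a * P a b * log (Ph a b / mixture W Ph b) =
      ∑ b ∈ univ.filter (fun b => 0 < mixture W P b), mixture W P b *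
        ∑ a ∈ univ.filter (fun a => 0 < posterior W P a b),
          posterior W P a b * log (posterior W P a b / posterior W Ph a b) := by
  have term : ∀ a b, W a * P a b * log (P a b / mixture W P b) -
      W a * P a b * log (Ph a b / mixture W Ph b) =
        W a * P a b * log (posterior W P a b / posterior W Ph a b) := by
    intro a b
    rcases (mul_nonneg (hW a) (hP a b)).eq_or_lt with h | h
    · simp [← h]
    have hWa : 0 < W a := pos_of_mul_pos_left h (hP a b)
    have hPab : 0 < P a b := pos_of_mul_pos_right h (hW a)
    have hPhab : 0 < Ph a b := hs a b h
    have hmix : 0 < mixture W P b := h.trans_le (mul_le_mixture hW hP a b)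
    have hmixh : 0 < mixture W Ph b := mixture_pos hW hP hPh hs hmix
    have ratio : posterior W P a b / posterior W Ph a b =
        (P a b / mixture W P b) / (Ph a b / mixture W Ph b) := by
      simp only [posterior, mul_div_assoc, mul_div_mul_left _ _ hWa.ne']
    rw [ratio, ← mul_sub, log_div (div_pos hPab hmix).ne' (div_pos hPhab hmixh).ne']
  rw [sum_filter_pos_mul (mixture_nonneg hW hP), ← sum_sub_distrib]
  simp only [← sum_sub_distrib, term]
  rw [sum_comm]
  refine sum_congr rfl fun b _ => ?_
  rw [sum_filter_pos_mul (posterior_nonneg hW hP · b), mul_sum]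
  simp only [← mul_assoc, mixture_mul_posterior hW hP]

theorem sum_mixture_mul_log_div_nonneg (hP1 : ∀ a, ∑ b, P a b = 1)
    (hPh1 : ∀ a, ∑ b, Ph a b = 1) :
    0 ≤ ∑ b ∈ univ.filter (fun b => 0 < mixture W P b),
      mixture W P b * log (mixture W P b / mixture W Ph b) := by
  rw [sum_filter_pos_mul (mixture_nonneg hW hP)]
  exact sum_mul_log_div_nonneg (mixture_nonneg hW hP) (mixture_nonneg hW hPh)
    (fun b => mixture_pos hW hP hPh hs) (by rw [sum_mixture hP1, sum_mixture hPh1])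

theorem sum_mixture_mul_posterior_log_div_nonneg :
    0 ≤ ∑ b ∈ univ.filter (fun b => 0 < mixture W P b), mixture W P b *
      ∑ a ∈ univ.filter (fun a => 0 < posterior W P a b),
        posterior W P a b * log (posterior W P a b / posterior W Ph a b) := by
  refine sum_nonneg fun b hb => ?_
  have hmix : 0 < mixture W P b := (mem_filter.mp hb).2
  have hmixh : 0 < mixture W Ph b := mixture_pos hW hP hPh hs hmix
  rw [sum_filter_pos_mul (posterior_nonneg hW hP · b)]
  refine mul_nonneg hmix.le (sum_mul_log_div_nonneg (posterior_nonneg hW hP · b)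
    (posterior_nonneg hW hPh · b) (fun a ha => ?_) ?_)
  · have h : 0 < W a * P a b := (div_pos_iff_of_pos_right hmix).mp ha
    exact div_pos (mul_pos (pos_of_mul_pos_left h (hP a b)) (hs a b h)) hmixh
  · rw [sum_posterior hmix.ne', sum_posterior hmixh.ne']

end Mixture

open scoped ComplexOrder in
theorem stmt19_general {X Y : Type} [Fintype X] [Fintype Y]
    (Q : X → ℝ) (hQ0 : ∀ x, 0 ≤ Q x)
    (d : ℕ) (κ : X → Y → Type) [∀ x y, Fintype (κ x y)]
    (Fk : ∀ (x : X) (y : Y), κ x y → Matrix (Fin d) (Fin d) ℂ)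
    (hnorm : ∀ x : X, ∑ y : Y, ∑ k : κ x y, (Fk x y k)ᴴ * Fk x y k = 1)
    (ρ0 : Matrix (Fin d) (Fin d) ℂ) (hρ0 : ρ0.PosSemidef) (hρ0tr : ρ0.trace = 1)
    (dh : ℕ) (κh : X → Y → Type) [∀ x y, Fintype (κh x y)]
    (Fkh : ∀ (x : X) (y : Y), κh x y → Matrix (Fin dh) (Fin dh) ℂ)
    (hnormh : ∀ x : X, ∑ y : Y, ∑ k : κh x y, (Fkh x y k)ᴴ * Fkh x y k = 1)
    (ρ0h : Matrix (Fin dh) (Fin dh) ℂ) (hρ0h : ρ0h.PosSemidef) (hρ0htr : ρ0h.trace = 1)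
    (n : ℕ)
    (hsupp : ∀ (x : Fin n → X) (y : Fin n → Y),
      0 < (∏ ℓ : Fin n, Q (x ℓ)) *
          ((evolve (fun x' y' ρ' => ∑ k : κ x' y', Fk x' y' k * ρ' * (Fk x' y' k)ᴴ)
              ρ0 n x y).trace).re →
      0 < ((evolve (fun x' y' ρ' => ∑ k : κh x' y', Fkh x' y' k * ρ' * (Fkh x' y' k)ᴴ)
              ρ0h n x y).trace).re) :
    let Qn : (Fin n → X) → ℝ := fun x => ∏ ℓ : Fin n, Q (x ℓ);
    let P : (Fin n → X) → (Fin n → Y) → ℝ := fun x y =>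
      ((evolve (fun x' y' ρ' => ∑ k : κ x' y', Fk x' y' k * ρ' * (Fk x' y' k)ᴴ)
          ρ0 n x y).trace).re;
    let Ph : (Fin n → X) → (Fin n → Y) → ℝ := fun x y =>
      ((evolve (fun x' y' ρ' => ∑ k : κh x' y', Fkh x' y' k * ρ' * (Fkh x' y' k)ᴴ)
          ρ0h n x y).trace).re;
    let QP : (Fin n → Y) → ℝ := fun y => ∑ x : Fin n → X, Qn x * P x y;
    let QPh : (Fin n → Y) → ℝ := fun y => ∑ x : Fin n → X, Qn x * Ph x y;
    let In : ℝ := (1 / (n : ℝ)) *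
      ∑ x : Fin n → X, ∑ y : Fin n → Y, Qn x * P x y * Real.log (P x y / QP y);
    let Iup : ℝ := (1 / (n : ℝ)) *
      ∑ x : Fin n → X, ∑ y : Fin n → Y, Qn x * P x y * Real.log (P x y / QPh y);
    let Ilow : ℝ := (1 / (n : ℝ)) *
      ∑ x : Fin n → X, ∑ y : Fin n → Y, Qn x * P x y * Real.log (Ph x y / QPh y);
    let Vc : (Fin n → X) → (Fin n → Y) → ℝ := fun x y => Qn x * P x y / QP y;
    let Vh : (Fin n → X) → (Fin n → Y) → ℝ := fun x y => Qn x * Ph x y / QPh y;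
    (Iup - In = (1 / (n : ℝ)) *
        ∑ y ∈ univ.filter (fun y : Fin n → Y => 0 < QP y),
          QP y * Real.log (QP y / QPh y)) ∧
    0 ≤ Iup - In ∧
    (In - Ilow = (1 / (n : ℝ)) *
        ∑ y ∈ univ.filter (fun y : Fin n → Y => 0 < QP y),
          QP y * ∑ x ∈ univ.filter (fun x : Fin n → X => 0 < Vc x y),
            Vc x y * Real.log (Vc x y / Vh x y)) ∧
    0 ≤ In - Ilow ∧
    Ilow ≤ In ∧ In ≤ Iup := by
  intro Qn P Ph QP QPh In Iup Ilow Vc Vh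
  have hQn : ∀ x, 0 ≤ Qn x := fun x => prod_nonneg fun ℓ _ => hQ0 (x ℓ)
  have hP : ∀ x y, 0 ≤ P x y := re_trace_evolve_krausMap_nonneg Fk hρ0 n
  have hPh : ∀ x y, 0 ≤ Ph x y := re_trace_evolve_krausMap_nonneg Fkh hρ0h n
  have hP1 : ∀ x, ∑ y, P x y = 1 := sum_re_trace_evolve_krausMap Fk hnorm hρ0tr n
  have hPh1 : ∀ x, ∑ y, Ph x y = 1 := sum_re_trace_evolve_krausMap Fkh hnormh hρ0htr n
  have hscale : (0 : ℝ) ≤ 1 / n := by positivity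
  have upper : Iup - In = _ :=
    (mul_sub _ _ _).symm.trans (congrArg _ (sum_mul_log_div_mixture_sub_eq hQn hP hPh hsupp))
  have lower : In - Ilow = _ :=
    (mul_sub _ _ _).symm.trans (congrArg _ (sum_mul_log_div_sub_eq_posterior hQn hP hPh hsupp))
  have upper_nonneg : 0 ≤ Iup - In := upper ▸
    mul_nonneg hscale (sum_mixture_mul_log_div_nonneg hQn hP hPh hsupp hP1 hPh1)
  have lower_nonneg : 0 ≤ In - Ilow := lower ▸
    mul_nonneg hscale (sum_mixture_mul_posterior_log_div_nonneg hQn hP hPh hsupp)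
  exact ⟨upper, upper_nonneg, lower, lower_nonneg, by linarith, by linarith⟩

open scoped ComplexOrder in
/-- Auxiliary-channel upper and lower bounds on the information rate of a CC-QSC:
`Ī⁽ⁿ⁾ − I⁽ⁿ⁾` is the normalized relative entropy of the output distributions (hence `≥ 0`)
and `I⁽ⁿ⁾ − Ĭ⁽ⁿ⁾` is the normalized average relative entropy of the backward channels
(hence `≥ 0`); in particular `Ĭ⁽ⁿ⁾ ≤ I⁽ⁿ⁾ ≤ Ī⁽ⁿ⁾`. -/
theorem stmt19 {X Y : Type} [Fintype X] [Fintype Y] [DecidableEq X] [DecidableEq Y]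
    (Q : X → ℝ) (hQ0 : ∀ x, 0 ≤ Q x) (hQ1 : ∑ x : X, Q x = 1)
    (d : ℕ) (κ : X → Y → Type) [∀ x y, Fintype (κ x y)]
    (Fk : ∀ (x : X) (y : Y), κ x y → Matrix (Fin d) (Fin d) ℂ)
    (hnorm : ∀ x : X, ∑ y : Y, ∑ k : κ x y, (Fk x y k)ᴴ * Fk x y k = 1)
    (ρ0 : Matrix (Fin d) (Fin d) ℂ) (hρ0 : ρ0.PosSemidef) (hρ0tr : ρ0.trace = 1)
    (dh : ℕ) (κh : X → Y → Type) [∀ x y, Fintype (κh x y)]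
    (Fkh : ∀ (x : X) (y : Y), κh x y → Matrix (Fin dh) (Fin dh) ℂ)
    (hnormh : ∀ x : X, ∑ y : Y, ∑ k : κh x y, (Fkh x y k)ᴴ * Fkh x y k = 1)
    (ρ0h : Matrix (Fin dh) (Fin dh) ℂ) (hρ0h : ρ0h.PosSemidef) (hρ0htr : ρ0h.trace = 1)
    (n : ℕ) (hn : 1 ≤ n)
    (hsupp : ∀ (x : Fin n → X) (y : Fin n → Y),
      0 < (∏ ℓ : Fin n, Q (x ℓ)) *
          ((evolve (fun x' y' ρ' => ∑ k : κ x' y', Fk x' y' k * ρ' * (Fk x' y' k)ᴴ)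
              ρ0 n x y).trace).re →
      0 < ((evolve (fun x' y' ρ' => ∑ k : κh x' y', Fkh x' y' k * ρ' * (Fkh x' y' k)ᴴ)
              ρ0h n x y).trace).re) :
    let Qn : (Fin n → X) → ℝ := fun x => ∏ ℓ : Fin n, Q (x ℓ);
    let P : (Fin n → X) → (Fin n → Y) → ℝ := fun x y =>
      ((evolve (fun x' y' ρ' => ∑ k : κ x' y', Fk x' y' k * ρ' * (Fk x' y' k)ᴴ)
          ρ0 n x y).trace).re;
    let Ph : (Fin n → X) → (Fin n → Y) → ℝ := fun x y =>
      ((evolve (fun x' y' ρ' => ∑ k : κh x' y', Fkh x' y' k * ρ' * (Fkh x' y' k)ᴴ)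
          ρ0h n x y).trace).re;
    let QP : (Fin n → Y) → ℝ := fun y => ∑ x : Fin n → X, Qn x * P x y;
    let QPh : (Fin n → Y) → ℝ := fun y => ∑ x : Fin n → X, Qn x * Ph x y;
    let In : ℝ := (1 / (n : ℝ)) *
      ∑ x : Fin n → X, ∑ y : Fin n → Y, Qn x * P x y * Real.log (P x y / QP y);
    let Iup : ℝ := (1 / (n : ℝ)) *
      ∑ x : Fin n → X, ∑ y : Fin n → Y, Qn x * P x y * Real.log (P x y / QPh y);
    let Ilow : ℝ := (1 / (n : ℝ)) *
      ∑ x : Fin n → X, ∑ y : Fin n → Y, Qn x * P x y * Real.log (Ph x y / QPh y);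
    let Vc : (Fin n → X) → (Fin n → Y) → ℝ := fun x y => Qn x * P x y / QP y;
    let Vh : (Fin n → X) → (Fin n → Y) → ℝ := fun x y => Qn x * Ph x y / QPh y;
    (Iup - In = (1 / (n : ℝ)) *
        ∑ y ∈ univ.filter (fun y : Fin n → Y => 0 < QP y),
          QP y * Real.log (QP y / QPh y)) ∧
    0 ≤ Iup - In ∧
    (In - Ilow = (1 / (n : ℝ)) *
        ∑ y ∈ univ.filter (fun y : Fin n → Y => 0 < QP y),
          QP y * ∑ x ∈ univ.filter (fun x : Fin n → X => 0 < Vc x y),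
            Vc x y * Real.log (Vc x y / Vh x y)) ∧
    0 ≤ In - Ilow ∧
    Ilow ≤ In ∧ In ≤ Iup :=
  stmt19_general Q hQ0 d κ Fk hnorm ρ0 hρ0 hρ0tr dh κh Fkh hnormh ρ0h hρ0h hρ0htr n hsupp
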